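/- Let (R,B,L) be a dual iteration system with compatibility condition (R^n b·l ∈ ℤ for all n ≥ 1, b ∈ B, l ∈ L) and Hadamard condition, with 0 ∈ L and 0 ∈ B. Then for any two distinct elements λ, λ' ∈ ℒ = {Σ_{k=0}^n (R*)^k l_k : l_k ∈ L}, the Fourier transform of the self-similar measure μ vanishes at their difference: μ̂(λ − λ') = 0. -/

import Mathlib

open MeasureTheory Matrix Real ENNReal

noncomputable section

variable {d : ℕ}

abbrev E (d : ℕ) := EuclideanSpace ℝ (Fin d)

/-- A real matrix is expansive if all its (complex) eigenvalues have modulus `> 1`. -/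
def IsExpansive (R : Matrix (Fin d) (Fin d) ℝ) : Prop :=
  ∀ z ∈ spectrum ℂ (R.map (Complex.ofReal)), 1 < ‖z‖

/-- The exponential `e_λ(x) = e^{2πi λ·x}`. -/
def eexp (lam x : E d) : ℂ := Complex.exp (2 * π * Complex.I * (inner ℝ lam x : ℝ))

/-- `χ_B(t) = N⁻¹ ∑_{b∈B} e^{2πi b·t}`. -/
def chiB (B : Finset (E d)) (t : E d) : ℂ := (B.card : ℂ)⁻¹ * ∑ b ∈ B, eexp b t

/-- The Fourier transform `μ̂(t) = ∫ e^{-2πi t·x} dμ(x)`. -/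
def muHat (μ : Measure (E d)) (t : E d) : ℂ := ∫ x, (starRingEnd ℂ) (eexp t x) ∂μ

/-- `μ` is the self-similar probability measure of the system `(R, B)`:
`μ = N⁻¹ ∑_{b∈B} μ ∘ σ_b⁻¹` with `σ_b(x) = R⁻¹ x + b`. -/
def IsSelfSimilarMeasure (R : Matrix (Fin d) (Fin d) ℝ) (B : Finset (E d))
    (μ : Measure (E d)) : Prop :=
  IsProbabilityMeasure μ ∧
    μ = (B.card : ℝ≥0∞)⁻¹ •
      ∑ b ∈ B, μ.map (fun (x : E d) => (show E d from WithLp.toLp 2 (R⁻¹.mulVec x)) + b)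

/-- The compatibility condition `R^n b · l ∈ ℤ` for all `n ≥ 1`, `b ∈ B`, `l ∈ L`. -/
def Compatible (R : Matrix (Fin d) (Fin d) ℝ) (B L : Finset (E d)) : Prop :=
  ∀ n : ℕ, 1 ≤ n → ∀ b ∈ B, ∀ l ∈ L,
    ∃ m : ℤ, (inner ℝ (show E d from WithLp.toLp 2 ((R ^ n).mulVec b)) l : ℝ) = (m : ℝ)

/-- The Hadamard condition: `N^{-1/2} (e^{2πi b·l})_{b∈B, l∈L}` is a unitary matrix. -/
def Hadamard (B L : Finset (E d)) : Prop :=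
  letI : DecidableEq (E d) := Classical.decEq _
  let H : Matrix B L ℂ :=
    fun b l => ((Real.sqrt B.card : ℝ) : ℂ)⁻¹ * eexp (b : E d) (l : E d)
  B.card = L.card ∧ H * H.conjTranspose = 1 ∧ H.conjTranspose * H = 1

/-- The dual lattice-like set `ℒ = {∑_{k=0}^n (R*)^k l_k : n ∈ ℕ, l_k ∈ L}`. -/
def LSet (R : Matrix (Fin d) (Fin d) ℝ) (L : Finset (E d)) : Set (E d) :=
  {t | ∃ n : ℕ, ∃ l : ℕ → E d, (∀ k, l k ∈ L) ∧
    t = ∑ k ∈ Finset.range (n + 1), (show E d from WithLp.toLp 2 ((Rᵀ ^ k).mulVec (l k)))}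

/-- The Ruelle transfer operator `(Cq)(t) = ∑_{l∈L} |χ_B(t−l)|² q((R*)⁻¹(t−l))`. -/
def ruelle (R : Matrix (Fin d) (Fin d) ℝ) (B L : Finset (E d))
    (q : E d → ℝ) (t : E d) : ℝ :=
  ∑ l ∈ L, ‖chiB B (t - l)‖ ^ 2 *
    q (show E d from WithLp.toLp 2 ((Rᵀ)⁻¹.mulVec (t - l)))

/-- `Q(t) = ∑_{λ∈ℒ} |μ̂(t−λ)|²`. -/
def Qfun (R : Matrix (Fin d) (Fin d) ℝ) (L : Finset (E d))
    (μ : Measure (E d)) (t : E d) : ℝ :=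
  ∑' lam : LSet R L, ‖muHat μ (t - lam)‖ ^ 2

/-- The attractor `X_ρ = {∑_{k=0}^∞ −(R*)^{-k} l_k : l_k ∈ L}`. -/
def attractorRho (R : Matrix (Fin d) (Fin d) ℝ) (L : Finset (E d)) : Set (E d) :=
  {x | ∃ l : ℕ → E d, (∀ k, l k ∈ L) ∧
    HasSum (fun k => -(show E d from WithLp.toLp 2 (((Rᵀ)⁻¹ ^ k).mulVec (l k)))) x}

/-- The Lipschitz-type norm `‖q‖_{Y,∞} = sup_{y∈Y} |∇q(y)|₂`. -/
def YNorm (Y : Set (E d)) (q : E d → ℝ) : ℝ :=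
  sSup ((fun y => ‖gradient q y‖) '' Y)


/-!
Write two elements of `ℒ` as digit expansions `∑_{k<N} (Rᵀ)^k l_k` of a common length, padding
with the digit `0 ∈ L`. Self-similarity gives `μ̂(t) = conj χ_B(t) · μ̂((Rᵀ)⁻¹ t)`. If the leading
digits agree, the difference is `Rᵀ` applied to a difference of shorter expansions, and we recurse.
Otherwise, by compatibility, the higher digits pair integrally with `B` and are invisible to `χ_B`,
so `χ_B` of the difference is `χ_B(l - l')` for distinct `l, l' ∈ L`; this vanishes because the
columns of the Hadamard matrix are orthogonal.
-/

open scoped ComplexConjugate RealInnerProductSpace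

lemma eexp_comm (a b : E d) : eexp a b = eexp b a := by
  rw [eexp, eexp, real_inner_comm]

lemma eexp_add_right (t x y : E d) : eexp t (x + y) = eexp t x * eexp t y := by
  simp only [eexp, inner_add_right, Complex.ofReal_add, mul_add, Complex.exp_add]

lemma conj_eexp (t x : E d) : conj (eexp t x) = eexp t (-x) := by
  simp only [eexp, ← Complex.exp_conj, inner_neg_right, map_mul, Complex.conj_ofReal,
    Complex.conj_I, map_ofNat, Complex.ofReal_neg]
  ring_nf

lemma conj_eexp_mul_eexp (b x y : E d) : conj (eexp b x) * eexp b y = eexp b (y - x) := by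
  rw [conj_eexp, ← eexp_add_right, neg_add_eq_sub]

lemma norm_eexp (t x : E d) : ‖eexp t x‖ = 1 := by
  rw [eexp, show 2 * (π : ℂ) * Complex.I * (⟪t, x⟫ : ℝ) = ((2 * π * ⟪t, x⟫ : ℝ) : ℂ) * Complex.I by
    push_cast; ring]
  exact Complex.norm_exp_ofReal_mul_I _

lemma continuous_eexp (t : E d) : Continuous (eexp t) := by
  unfold eexp
  fun_prop

lemma continuous_conj_eexp (t : E d) : Continuous fun x => conj (eexp t x) :=
  Complex.continuous_conj.comp (continuous_eexp t)

lemma eexp_eq_one_of_inner_eq_intCast {t x : E d} {m : ℤ} (h : ⟪t, x⟫ = m) : eexp t x = 1 := by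
  rw [eexp, h, show 2 * (π : ℂ) * Complex.I * ((m : ℝ) : ℂ) = m * (2 * π * Complex.I) by
    push_cast; ring]
  exact Complex.exp_int_mul_two_pi_mul_I m

lemma inner_toEuclideanCLM_right (M : Matrix (Fin d) (Fin d) ℝ) (x y : E d) :
    ⟪x, toEuclideanCLM (𝕜 := ℝ) M y⟫ = ⟪toEuclideanCLM (𝕜 := ℝ) Mᵀ x, y⟫ := by
  rw [← ContinuousLinearMap.adjoint_inner_left, ← ContinuousLinearMap.star_eq_adjoint,
    ← map_star, star_eq_conjTranspose, conjTranspose_eq_transpose_of_trivial]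

lemma eexp_toEuclideanCLM (M : Matrix (Fin d) (Fin d) ℝ) (t x : E d) :
    eexp t (toEuclideanCLM (𝕜 := ℝ) M x) = eexp (toEuclideanCLM (𝕜 := ℝ) Mᵀ t) x := by
  rw [eexp, eexp, inner_toEuclideanCLM_right]

lemma IsExpansive.isUnit_det {R : Matrix (Fin d) (Fin d) ℝ} (hR : IsExpansive R) :
    IsUnit R.det := by
  by_contra h
  have h0 : (0 : ℂ) ∈ spectrum ℂ (R.map Complex.ofReal) := by
    rw [spectrum.zero_mem_iff, isUnit_iff_isUnit_det,
      show (R.map Complex.ofReal).det = Complex.ofRealHom R.det from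
        (RingHom.map_det Complex.ofRealHom R).symm]
    simpa [isUnit_iff_ne_zero] using h
  exact (hR 0 h0).not_ge (by simp)

lemma integrable_conj_eexp (ν : Measure (E d)) [IsFiniteMeasure ν] (t : E d) :
    Integrable (fun x => conj (eexp t x)) ν :=
  Integrable.of_bound (continuous_conj_eexp t).aestronglyMeasurable 1
    (ae_of_all _ fun x => by rw [RCLike.norm_conj, norm_eexp])

lemma muHat_map_affine (ν : Measure (E d)) (M : Matrix (Fin d) (Fin d) ℝ) (b t : E d) :
    muHat (ν.map fun x => toEuclideanCLM (𝕜 := ℝ) M x + b) t =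
      conj (eexp b t) * muHat ν (toEuclideanCLM (𝕜 := ℝ) Mᵀ t) := by
  rw [muHat, integral_map (by fun_prop) (continuous_conj_eexp t).aestronglyMeasurable, muHat,
    ← integral_const_mul]
  congr 1 with x
  rw [eexp_add_right, map_mul, eexp_toEuclideanCLM, eexp_comm t b, mul_comm]

def integralDual (B : Finset (E d)) : AddSubgroup (E d) where
  carrier := {w | ∀ b ∈ B, ∃ m : ℤ, ⟪b, w⟫ = m}
  zero_mem' _ _ := ⟨0, by simp⟩
  add_mem' {v w} hv hw b hb := by
    obtain ⟨m, hm⟩ := hv b hb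
    obtain ⟨n, hn⟩ := hw b hb
    exact ⟨m + n, by rw [inner_add_right, hm, hn, Int.cast_add]⟩
  neg_mem' {w} hw b hb := by
    obtain ⟨m, hm⟩ := hw b hb
    exact ⟨-m, by rw [inner_neg_right, hm, Int.cast_neg]⟩

lemma chiB_add_of_mem_integralDual {B : Finset (E d)} (v : E d) {w : E d}
    (hw : w ∈ integralDual B) : chiB B (v + w) = chiB B v := by
  rw [chiB, chiB]
  congr 1
  refine Finset.sum_congr rfl fun b hb => ?_
  obtain ⟨m, hm⟩ := hw b hb
  rw [eexp_add_right, eexp_eq_one_of_inner_eq_intCast hm, mul_one]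

lemma Hadamard.chiB_sub_eq_zero {B L : Finset (E d)} (hHad : Hadamard B L) {l l' : E d}
    (hl : l ∈ L) (hl' : l' ∈ L) (hne : l ≠ l') : chiB B (l' - l) = 0 := by
  have hentry :
      ∑ b : B, conj ((√B.card : ℂ)⁻¹ * eexp b l) * ((√B.card : ℂ)⁻¹ * eexp b l') = 0 := by
    have h := congrFun (congrFun hHad.2.2 ⟨l, hl⟩) ⟨l', hl'⟩
    simp only [one_apply, Subtype.mk.injEq, hne, if_false] at h
    exact h
  rw [← hentry, chiB, ← Finset.sum_coe_sort B, Finset.mul_sum]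
  refine Finset.sum_congr rfl fun b _ => ?_
  rw [map_mul, map_inv₀, Complex.conj_ofReal, mul_mul_mul_comm, conj_eexp_mul_eexp, ← mul_inv,
    ← Complex.ofReal_mul, Real.mul_self_sqrt (Nat.cast_nonneg _), Complex.ofReal_natCast]

def digitSum (R : Matrix (Fin d) (Fin d) ℝ) (u : ℕ → E d) (N : ℕ) : E d :=
  ∑ k ∈ Finset.range N, toEuclideanCLM (𝕜 := ℝ) (Rᵀ ^ k) (u k)

section SelfSimilar

variable {R : Matrix (Fin d) (Fin d) ℝ} {B L : Finset (E d)} {μ : Measure (E d)}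

lemma isSelfSimilarMeasure_iff :
    IsSelfSimilarMeasure R B μ ↔ IsProbabilityMeasure μ ∧
      μ = (B.card : ℝ≥0∞)⁻¹ • ∑ b ∈ B, μ.map fun x => toEuclideanCLM (𝕜 := ℝ) R⁻¹ x + b :=
  Iff.rfl

lemma IsSelfSimilarMeasure.muHat_eq (hμ : IsSelfSimilarMeasure R B μ) (t : E d) :
    muHat μ t = conj (chiB B t) * muHat μ (toEuclideanCLM (𝕜 := ℝ) R⁻¹ᵀ t) := by
  obtain ⟨hprob, hrec⟩ := isSelfSimilarMeasure_iff.mp hμ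
  have hint (b : E d) :=
    integrable_conj_eexp (μ.map fun x => toEuclideanCLM (𝕜 := ℝ) R⁻¹ x + b) t
  calc muHat μ t
      = (B.card : ℝ≥0∞)⁻¹.toReal •
          ∑ b ∈ B, muHat (μ.map fun x => toEuclideanCLM (𝕜 := ℝ) R⁻¹ x + b) t := by
        conv_lhs => rw [muHat, hrec]
        rw [integral_smul_measure, integral_finsetSum_measure fun b _ => hint b]
        rfl
    _ = conj (chiB B t) * muHat μ (toEuclideanCLM (𝕜 := ℝ) R⁻¹ᵀ t) := by
        simp only [muHat_map_affine, chiB, ← Finset.sum_mul, map_mul, map_sum, map_inv₀,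
          map_natCast, ENNReal.toReal_inv, ENNReal.toReal_natCast, Complex.real_smul,
          Complex.ofReal_inv, Complex.ofReal_natCast, mul_assoc]

lemma IsSelfSimilarMeasure.muHat_toEuclideanCLM_transpose (hμ : IsSelfSimilarMeasure R B μ)
    (hR : IsUnit R.det) (t : E d) :
    muHat μ (toEuclideanCLM (𝕜 := ℝ) Rᵀ t) =
      conj (chiB B (toEuclideanCLM (𝕜 := ℝ) Rᵀ t)) * muHat μ t := by
  rw [hμ.muHat_eq, ← mul_apply_eq_comp, ← map_mul, ← transpose_mul, mul_nonsing_inv R hR,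
    transpose_one, map_one, one_apply_eq_self]

@[simp]
lemma digitSum_zero (u : ℕ → E d) : digitSum R u 0 = 0 :=
  Finset.sum_range_zero _

lemma digitSum_succ' (u : ℕ → E d) (N : ℕ) :
    digitSum R u (N + 1) =
      u 0 + toEuclideanCLM (𝕜 := ℝ) Rᵀ (digitSum R (fun k => u (k + 1)) N) := by
  rw [digitSum, Finset.sum_range_succ', add_comm, pow_zero, map_one, one_apply_eq_self, digitSum,
    map_sum]
  congr 1
  refine Finset.sum_congr rfl fun k _ => ?_
  rw [pow_succ', map_mul, mul_apply_eq_comp]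

lemma mem_LSet_iff {t : E d} :
    t ∈ LSet R L ↔ ∃ n : ℕ, ∃ l : ℕ → E d, (∀ k, l k ∈ L) ∧ t = digitSum R l (n + 1) :=
  Iff.rfl

lemma exists_digitSum_of_mem_LSet (h0L : (0 : E d) ∈ L) {t : E d} (ht : t ∈ LSet R L) :
    ∃ n, ∀ N ≥ n, ∃ u : ℕ → E d, (∀ k, u k ∈ L) ∧ t = digitSum R u N := by
  obtain ⟨n, l, hl, rfl⟩ := mem_LSet_iff.mp ht
  let u k := if k < n + 1 then l k else 0
  have hu k : u k ∈ L := by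
    dsimp only [u]
    split_ifs
    exacts [hl k, h0L]
  refine ⟨n + 1, fun N hN => ⟨u, hu, ?_⟩⟩
  rw [digitSum, digitSum, ← Finset.sum_range_add_sum_Ico _ hN,
    Finset.sum_eq_zero (s := Finset.Ico (n + 1) N) fun k hk => ?_, add_zero]
  · exact Finset.sum_congr rfl fun k hk => by simp only [u, if_pos (Finset.mem_range.mp hk)]
  · simp only [u, if_neg (Finset.mem_Ico.mp hk).1.not_gt, map_zero]

lemma Compatible.toEuclideanCLM_digitSum_mem_integralDual (hcomp : Compatible R B L)
    {u : ℕ → E d} (hu : ∀ k, u k ∈ L) (N : ℕ) :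
    toEuclideanCLM (𝕜 := ℝ) Rᵀ (digitSum R u N) ∈ integralDual B := by
  rw [digitSum, map_sum]
  refine AddSubgroup.sum_mem _ fun k _ b hb => ?_
  obtain ⟨m, hm⟩ := hcomp (k + 1) k.succ_pos b hb (u k) (hu k)
  refine ⟨m, ?_⟩
  rw [← mul_apply_eq_comp, ← map_mul, ← pow_succ', inner_toEuclideanCLM_right, transpose_pow,
    transpose_transpose]
  exact hm

theorem muHat_digitSum_sub_digitSum_eq_zero (hR : IsUnit R.det) (hcomp : Compatible R B L)
    (hHad : Hadamard B L) (hμ : IsSelfSimilarMeasure R B μ) (N : ℕ) {u v : ℕ → E d}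
    (hu : ∀ k, u k ∈ L) (hv : ∀ k, v k ∈ L) (hne : digitSum R u N ≠ digitSum R v N) :
    muHat μ (digitSum R u N - digitSum R v N) = 0 := by
  induction N generalizing u v with
  | zero => simp at hne
  | succ N ih =>
    set su := digitSum R (fun k => u (k + 1)) N
    set sv := digitSum R (fun k => v (k + 1)) N
    have hsplit : digitSum R u (N + 1) - digitSum R v (N + 1) =
        (u 0 - v 0) + toEuclideanCLM (𝕜 := ℝ) Rᵀ (su - sv) := by
      rw [digitSum_succ', digitSum_succ', map_sub]
      abel
    rw [hsplit]
    by_cases h0 : u 0 = v 0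
    · have hs : su ≠ sv := fun h => hne <| by
        rw [digitSum_succ', digitSum_succ', h0]
        exact congrArg _ (congrArg _ h)
      rw [h0, sub_self, zero_add, hμ.muHat_toEuclideanCLM_transpose hR,
        ih (fun k => hu (k + 1)) (fun k => hv (k + 1)) hs, mul_zero]
    · have hmem : toEuclideanCLM (𝕜 := ℝ) Rᵀ (su - sv) ∈ integralDual B := by
        rw [map_sub]
        exact sub_mem (hcomp.toEuclideanCLM_digitSum_mem_integralDual (fun k => hu (k + 1)) N)
          (hcomp.toEuclideanCLM_digitSum_mem_integralDual (fun k => hv (k + 1)) N)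
      rw [hμ.muHat_eq, chiB_add_of_mem_integralDual _ hmem,
        hHad.chiB_sub_eq_zero (hv 0) (hu 0) (Ne.symm h0), map_zero, zero_mul]

end SelfSimilar

theorem muHat_vanishes_on_differences_general
    (R : Matrix (Fin d) (Fin d) ℝ) (hR : IsExpansive R)
    (B L : Finset (E d))
    (hcomp : Compatible R B L) (hHad : Hadamard B L)
    (h0L : (0 : E d) ∈ L)
    (μ : Measure (E d)) (hμ : IsSelfSimilarMeasure R B μ) :
    ∀ lam ∈ LSet R L, ∀ lam' ∈ LSet R L, lam ≠ lam' →
      muHat μ (lam - lam') = 0 := by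
  intro lam hlam lam' hlam' hne
  obtain ⟨n, hn⟩ := exists_digitSum_of_mem_LSet h0L hlam
  obtain ⟨n', hn'⟩ := exists_digitSum_of_mem_LSet h0L hlam'
  obtain ⟨u, hu, rfl⟩ := hn (max n n') (le_max_left n n')
  obtain ⟨v, hv, rfl⟩ := hn' (max n n') (le_max_right n n')
  exact muHat_digitSum_sub_digitSum_eq_zero hR.isUnit_det hcomp hHad hμ _ hu hv hne

/-- For a dual iteration system `(R,B,L)` with compatibility and Hadamard conditions,
`0 ∈ L`, `0 ∈ B`, the Fourier transform of the self-similar measure vanishes on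
differences of distinct elements of `ℒ`. -/
theorem muHat_vanishes_on_differences
    (R : Matrix (Fin d) (Fin d) ℝ) (hR : IsExpansive R)
    (B L : Finset (E d)) (hN : B.card = L.card)
    (hcomp : Compatible R B L) (hHad : Hadamard B L)
    (h0L : (0 : E d) ∈ L) (h0B : (0 : E d) ∈ B)
    (μ : Measure (E d)) (hμ : IsSelfSimilarMeasure R B μ) :
    ∀ lam ∈ LSet R L, ∀ lam' ∈ LSet R L, lam ≠ lam' →
      muHat μ (lam - lam') = 0 :=
  muHat_vanishes_on_differences_general R hR B L hcomp hHad h0L μ hμ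

end
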